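/- For every integer k ≥ 1, the formal power series identity ∑_{n≥0} q^{2n} (q^{2n+2};q²)_∞ (q^{2n+2k};q²)_∞ / (q^{2n+1};q²)_∞² = ((q²;q²)_∞² / ((q;q²)_∞² (q²;q²)_{k-1})) · ∑_{n≥0} (q;q²)_n² q^{2n} / ((q²;q²)_n (q^{2k};q²)_n) holds. -/

import Mathlib

open Finset PowerSeries

/-!
Every summand of `F_{k,1}` is, on its own, the prefactor times the corresponding term of the
`₂φ₁` series: `(q^{a+2n};q²)_∞ = (q^a;q²)_∞ / (q^a;q²)_n`, applied with `a = 1, 2, 2k` and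
`(q^{2k};q²)_∞ = (q²;q²)_∞ / (q²;q²)_{k-1}`. Since the `n`-th term has order at least `n`,
multiplication by the prefactor commutes with the coefficientwise summation.
-/

/-- `(q^a; q^2)_n = ∏_{j<n} (1 - q^(a+2j))` as a formal power series in `q`. -/
noncomputable def P2 (a n : ℕ) : PowerSeries ℚ :=
  ∏ j ∈ Finset.range n, (1 - (PowerSeries.X : PowerSeries ℚ) ^ (a + 2 * j))

/-- `(q^a; q^2)_∞ = ∏_{j≥0} (1 - q^(a+2j))` (for `a ≥ 1`) as a formal power series. -/
noncomputable def P2inf (a : ℕ) : PowerSeries ℚ :=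
  PowerSeries.mk fun m => PowerSeries.coeff m (P2 a (m + 1))

/-- The Andrews–El Bachraoui series
`F_{k,1}(q) = ∑_{n≥0} q^{2n} (q^{2n+2};q²)_∞ (q^{2n+2k};q²)_∞ / (q^{2n+1};q²)_∞²`,
defined coefficientwise. -/
noncomputable def AEB (k : ℕ) : PowerSeries ℚ :=
  PowerSeries.mk fun m => ∑ n ∈ Finset.range (m + 1),
    PowerSeries.coeff m
      ((PowerSeries.X : PowerSeries ℚ) ^ (2 * n) * P2inf (2 * n + 2) *
        P2inf (2 * n + 2 * k) * (P2inf (2 * n + 1) ^ 2)⁻¹)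

namespace PowerSeries

variable {R : Type*} [Semiring R]

/-- The sum `∑ₙ f n` of a family with `Xⁿ ∣ f n`, computed coefficientwise. -/
noncomputable def formalSum (f : ℕ → R⟦X⟧) : R⟦X⟧ :=
  mk fun m => ∑ n ∈ range (m + 1), coeff m (f n)

lemma coeff_formalSum_eq_coeff_sum {f : ℕ → R⟦X⟧} (hf : ∀ n, X ^ n ∣ f n) {j m : ℕ}
    (hjm : j ≤ m) : coeff j (formalSum f) = coeff j (∑ n ∈ range (m + 1), f n) := by
  rw [formalSum, coeff_mk, map_sum]
  refine sum_subset (range_subset_range.mpr (by omega)) fun n _ hn => ?_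
  exact X_pow_dvd_iff.mp (hf n) j (by simpa using hn)

lemma mul_formalSum (c : R⟦X⟧) {f : ℕ → R⟦X⟧} (hf : ∀ n, X ^ n ∣ f n) :
    c * formalSum f = formalSum fun n => c * f n := by
  ext m
  have hsum : coeff m (formalSum fun n => c * f n) = coeff m (c * ∑ n ∈ range (m + 1), f n) := by
    rw [formalSum, coeff_mk, mul_sum, map_sum]
  rw [hsum, coeff_mul, coeff_mul]
  refine sum_congr rfl fun p hp => ?_
  rw [coeff_formalSum_eq_coeff_sum (m := m) hf (by have := mem_antidiagonal.mp hp; omega)]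

end PowerSeries

lemma P2_add (a n M : ℕ) : P2 a (n + M) = P2 a n * P2 (a + 2 * n) M := by
  rw [P2, P2, P2, prod_range_add]
  congr 1
  refine prod_congr rfl fun j _ => ?_
  ring_nf

lemma coeff_P2_of_le {a m N M : ℕ} (ha : 1 ≤ a) (hN : m < N) (hNM : N ≤ M) :
    coeff m (P2 a M) = coeff m (P2 a N) := by
  induction M, hNM using Nat.le_induction with
  | base => rfl
  | succ M hM ih =>
    rw [P2, prod_range_succ, ← P2, mul_sub, mul_one, map_sub, coeff_mul_X_pow',
      if_neg (by omega), sub_zero, ih]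

lemma constantCoeff_P2 {a : ℕ} (ha : 1 ≤ a) (n : ℕ) : constantCoeff (P2 a n) = 1 := by
  rw [P2, map_prod]
  refine prod_eq_one fun j _ => ?_
  rw [map_sub, map_one, map_pow, constantCoeff_X, zero_pow (by omega), sub_zero]

lemma constantCoeff_P2inf {a : ℕ} (ha : 1 ≤ a) : constantCoeff (P2inf a) = 1 := by
  rw [← coeff_zero_eq_constantCoeff_apply, P2inf, coeff_mk, coeff_zero_eq_constantCoeff_apply,
    constantCoeff_P2 ha]

lemma P2_mul_P2inf {a : ℕ} (ha : 1 ≤ a) (n : ℕ) : P2 a n * P2inf (a + 2 * n) = P2inf a := by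
  ext m
  have hrhs : coeff m (P2inf a) = coeff m (P2 a n * P2 (a + 2 * n) (m + 1)) := by
    rw [P2inf, coeff_mk, ← P2_add, coeff_P2_of_le ha (Nat.lt_succ_self m) (Nat.le_add_left _ n)]
  rw [hrhs, coeff_mul, coeff_mul]
  refine sum_congr rfl fun p hp => ?_
  have hpm : p.2 + 1 ≤ m + 1 := by have := mem_antidiagonal.mp hp; omega
  rw [P2inf, coeff_mk, coeff_P2_of_le (by omega) (Nat.lt_succ_self p.2) hpm]

lemma P2inf_add {a : ℕ} (ha : 1 ≤ a) (n : ℕ) : P2inf (a + 2 * n) = P2inf a * (P2 a n)⁻¹ := by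
  rw [eq_mul_inv_iff_mul_eq (by simp [constantCoeff_P2 ha]), mul_comm, P2_mul_P2inf ha]

lemma inv_P2inf_add {a : ℕ} (ha : 1 ≤ a) (n : ℕ) :
    (P2inf (a + 2 * n))⁻¹ = P2 a n * (P2inf a)⁻¹ := by
  have hshift : constantCoeff (P2inf (a + 2 * n)) ≠ 0 := by
    rw [constantCoeff_P2inf (by omega)]; exact one_ne_zero
  rw [PowerSeries.inv_eq_iff_mul_eq_one hshift, mul_right_comm, P2_mul_P2inf ha,
    PowerSeries.mul_inv_cancel _ (by simp [constantCoeff_P2inf ha])]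

lemma AEB_term_eq {k : ℕ} (hk : 1 ≤ k) (n : ℕ) :
    X ^ (2 * n) * P2inf (2 * n + 2) * P2inf (2 * n + 2 * k) * (P2inf (2 * n + 1) ^ 2)⁻¹ =
      P2inf 2 ^ 2 * (P2inf 1 ^ 2 * P2 2 (k - 1))⁻¹ *
        (P2 1 n ^ 2 * X ^ (2 * n) * (P2 2 n * P2 (2 * k) n)⁻¹) := by
  have h2 : P2inf (2 * n + 2) = P2inf 2 * (P2 2 n)⁻¹ := by
    rw [add_comm, P2inf_add one_le_two]
  have h2k : P2inf (2 * n + 2 * k) = P2inf 2 * (P2 2 (k - 1))⁻¹ * (P2 (2 * k) n)⁻¹ := by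
    have hk2 : P2inf (2 * k) = P2inf 2 * (P2 2 (k - 1))⁻¹ := by
      rw [← P2inf_add one_le_two]
      congr 1
      omega
    rw [add_comm, P2inf_add (by omega), hk2]
  have h1 : (P2inf (2 * n + 1))⁻¹ = P2 1 n * (P2inf 1)⁻¹ := by
    rw [add_comm, inv_P2inf_add (le_refl 1)]
  simp only [h2, h2k, sq, PowerSeries.mul_inv_rev, h1]
  ring

/-- For every `k ≥ 1`,
`F_{k,1}(q) = ((q²;q²)_∞² / ((q;q²)_∞² (q²;q²)_{k-1}))
  · ∑_{n≥0} (q;q²)_n² q^{2n} / ((q²;q²)_n (q^{2k};q²)_n)`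
as formal power series (the `₂φ₁` sum is defined coefficientwise, its `n`-th term
having order at least `2n`). -/
theorem stmt_16 (k : ℕ) (hk : 1 ≤ k) :
    AEB k = P2inf 2 ^ 2 * (P2inf 1 ^ 2 * P2 2 (k - 1))⁻¹ *
      PowerSeries.mk fun m => ∑ n ∈ Finset.range (m + 1),
        PowerSeries.coeff m
          (P2 1 n ^ 2 * (PowerSeries.X : PowerSeries ℚ) ^ (2 * n) *
            (P2 2 n * P2 (2 * k) n)⁻¹) := by
  have hdvd : ∀ n, (X : ℚ⟦X⟧) ^ n ∣ P2 1 n ^ 2 * X ^ (2 * n) * (P2 2 n * P2 (2 * k) n)⁻¹ :=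
    fun n => ((pow_dvd_pow X (by omega)).trans (dvd_mul_left _ _)).mul_right _
  change formalSum _ = _ * formalSum _
  rw [mul_formalSum _ hdvd]
  simp only [AEB_term_eq hk]
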